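/- Define the orbit map Φ on X = {(k, m, s) ∈ ℤ³ : k ≥ 1, m ≥ 1, 0 ≤ s < m} as above. Then (k, m, s) ∈ X is a fixed point of Φ if and only if there exist integers n ≥ 1 and 0 ≤ x < n with m = k·n, s = k·x, and n dividing x² + x + 1. -/

import Mathlib

/-!
At a fixed point `k = gcd(s, m)`, so `s = k x` and `m = k n`. Cancelling `k` from the two
congruences gives `b x ≡ -1` and `b ≡ x + 1 (mod n)`, and eliminating `b` leaves
`x² + x + 1 ≡ 0 (mod n)`. Conversely `b = x + 1` satisfies both congruences, and
`x² + x + 1 ≡ 0 (mod n)` forces `gcd(x, n) = 1`, so that `gcd(k x, k n) = k`.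
-/

/-- `OrbitStep k m s k' m' s'` says that the orbit map of the paper sends the
index-vector `(k, m, s)` to `(k', m', s')`:
`k' = gcd(s, m)` (with `gcd 0 m = m`), `k' * m' = k * m`, `0 ≤ s' < m'`, and
`s' ≡ b*k - k' (mod m')` where `b` is the unique integer with `0 < b ≤ m / k'`
and `b*s ≡ -k' (mod m)`. -/
def OrbitStep (k m s k' m' s' : ℤ) : Prop :=
  k' = (Int.gcd s m : ℤ) ∧ k' * m' = k * m ∧ 0 ≤ s' ∧ s' < m' ∧
    ∃ b : ℤ, 0 < b ∧ b ≤ m / k' ∧ m ∣ b * s + k' ∧ m' ∣ s' - (b * k - k')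

theorem Int.dvd_sq_add_add_one_of_dvd {n x b : ℤ} (h₁ : n ∣ b * x + 1) (h₂ : n ∣ x - b + 1) :
    n ∣ x ^ 2 + x + 1 := by
  rw [show x ^ 2 + x + 1 = (b * x + 1) + x * (x - b + 1) by ring]
  exact h₁.add (h₂.mul_left x)

theorem Int.isCoprime_of_dvd_sq_add_add_one {n x : ℤ} (h : n ∣ x ^ 2 + x + 1) :
    IsCoprime x n := by
  obtain ⟨c, hc⟩ := h
  exact ⟨-(x + 1), c, by linear_combination -hc⟩

theorem Int.gcd_mul_mul_of_isCoprime {k x n : ℤ} (hk : 0 ≤ k) (h : IsCoprime x n) :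
    (Int.gcd (k * x) (k * n) : ℤ) = k := by
  rw [Int.gcd_mul_left, Int.isCoprime_iff_gcd_eq_one.mp h, mul_one, Int.natCast_natAbs,
    abs_of_nonneg hk]

namespace OrbitStep

theorem exists_dvd_sq_add_add_one_of_self {k m s : ℤ} (hk : 0 < k) (hm : 0 < m) (hs : 0 ≤ s)
    (hsm : s < m) (h : OrbitStep k m s k m s) :
    ∃ n x : ℤ, 1 ≤ n ∧ 0 ≤ x ∧ x < n ∧ m = k * n ∧ s = k * x ∧ n ∣ x ^ 2 + x + 1 := by
  obtain ⟨hgcd, -, -, -, b, -, -, hdvd₁, hdvd₂⟩ := h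
  obtain ⟨x, rfl⟩ : k ∣ s := hgcd ▸ Int.gcd_dvd_left s m
  obtain ⟨n, rfl⟩ : k ∣ m := hgcd ▸ Int.gcd_dvd_right _ _
  have hk₀ : k ≠ 0 := hk.ne'
  have h₁ : n ∣ b * x + 1 := by
    rw [← mul_dvd_mul_iff_left hk₀, show k * (b * x + 1) = b * (k * x) + k by ring]
    exact hdvd₁
  have h₂ : n ∣ x - b + 1 := by
    rw [← mul_dvd_mul_iff_left hk₀, show k * (x - b + 1) = k * x - (b * k - k) by ring]
    exact hdvd₂
  have hn : 0 < n := pos_of_mul_pos_right (a := k) (by omega) (by omega)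
  exact ⟨n, x, hn, nonneg_of_mul_nonneg_right hs (by omega),
    lt_of_mul_lt_mul_left hsm (by omega), rfl, rfl, Int.dvd_sq_add_add_one_of_dvd h₁ h₂⟩

theorem self_of_dvd_sq_add_add_one {k n x : ℤ} (hk : 0 < k) (hx : 0 ≤ x) (hxn : x < n)
    (h : n ∣ x ^ 2 + x + 1) :
    OrbitStep k (k * n) (k * x) k (k * n) (k * x) := by
  refine ⟨(Int.gcd_mul_mul_of_isCoprime hk.le (Int.isCoprime_of_dvd_sq_add_add_one h)).symm,
    rfl, mul_nonneg hk.le hx, mul_lt_mul_of_pos_left hxn hk, x + 1, by omega, ?_, ?_, ?_⟩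
  · rw [Int.mul_ediv_cancel_left _ hk.ne']
    omega
  · rw [show (x + 1) * (k * x) + k = k * (x ^ 2 + x + 1) by ring]
    exact mul_dvd_mul_left k h
  · rw [show k * x - ((x + 1) * k - k) = 0 by ring]
    exact dvd_zero _

end OrbitStep

theorem fixed_point_orbit_characterization
    (k m s : ℤ) (hk : 1 ≤ k) (hm : 1 ≤ m) (hs : 0 ≤ s) (hsm : s < m) :
    OrbitStep k m s k m s ↔
      ∃ n x : ℤ, 1 ≤ n ∧ 0 ≤ x ∧ x < n ∧ m = k * n ∧ s = k * x ∧
        n ∣ x ^ 2 + x + 1 := by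
  refine ⟨OrbitStep.exists_dvd_sq_add_add_one_of_self (by omega) (by omega) hs hsm, ?_⟩
  rintro ⟨n, x, -, hx, hxn, rfl, rfl, h⟩
  exact OrbitStep.self_of_dvd_sq_add_add_one (by omega) hx hxn h
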